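/- arXiv:2602.01400 — 7 statements merged into one kernel-verified Lean document; each statement's English description precedes it below -/
import Mathlib

section
/- Let (Ω, 𝒜, ℙ) be a probability space, n ≥ 1, k ≤ n, δ ∈ (0,1), and P_k = {p ∈ [0,1]^n : ∑_i p_i = k}. Let M : ℝ_{≥0}^n → ℝ be monotone, i.e., coordinatewise v ≤ v' implies M(v) ≤ M(v'). Let μ ∈ ℝ_{≥0}^n be fixed and let p* ∈ P_k be a maximizer of p ↦ M(μ ⊙ p) over P_k. For each t ∈ ℕ let μ↓_t, μ↑_t : Ω → ℝ_{≥0}^n be measurable, and let p↓_t, p↑_t : Ω → P_k be measurable maps such that, for every ω, p↓_t(ω) maximizes p ↦ M(μ↓_t(ω) ⊙ p) over P_k and p↑_t(ω) maximizes p ↦ M(μ↑_t(ω) ⊙ p) over P_k. If for every coordinate i one has ℙ(∃ t ∈ ℕ : μ_i ∉ [μ↓_{t,i}, μ↑_{t,i}]) ≤ δ/n, then ℙ(∃ t ∈ ℕ : M(μ ⊙ p*) ∉ [M(μ↓_t ⊙ p↓_t), M(μ↑_t ⊙ p↑_t)]) ≤ δ. -/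
/-! On the event where every coordinate `μ i` lies in its interval, monotonicity of `M` sandwiches
the optimal welfare: `M (μ↓ ⊙ p↓) ≤ M (μ ⊙ p↓) ≤ M (μ ⊙ p*)` since `p*` is optimal for `μ`, and
`M (μ ⊙ p*) ≤ M (μ↑ ⊙ p*) ≤ M (μ↑ ⊙ p↑)` since `p↑` is optimal for `μ↑`. Hence the welfare
interval can only fail where some coordinate interval fails, and a union bound over the `n`
coordinates gives `n · δ / n = δ`. -/

/-- The set of allocation policies distributing `k` resources among `n` individuals. -/
def Pk (n k : ℕ) : Set (Fin n → ℝ) :=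
  {p | (∀ i, 0 ≤ p i ∧ p i ≤ 1) ∧ ∑ i, p i = (k : ℝ)}

theorem Pk_subset_Ici_zero (n k : ℕ) : Pk n k ⊆ Set.Ici 0 :=
  fun _ hp i => (hp.1 i).1

section Welfare

variable {ι : Type*} {M : (ι → ℝ) → ℝ}

theorem MonotoneOn.apply_mul_le_apply_mul (hM : MonotoneOn M (Set.Ici 0)) {u v p : ι → ℝ}
    (hu : 0 ≤ u) (huv : u ≤ v) (hp : 0 ≤ p) : M (u * p) ≤ M (v * p) :=
  hM (mul_nonneg hu hp) (mul_nonneg (hu.trans huv) hp) (mul_le_mul_of_nonneg_right huv hp)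

theorem MonotoneOn.optimal_value_mem_Icc (hM : MonotoneOn M (Set.Ici 0)) {S : Set (ι → ℝ)}
    (hS : S ⊆ Set.Ici 0) {μ μdown μup p pdown pup : ι → ℝ}
    (hμdown : 0 ≤ μdown) (hdown : μdown ≤ μ) (hup : μ ≤ μup)
    (hp : p ∈ S) (hp_opt : ∀ q ∈ S, M (μ * q) ≤ M (μ * p))
    (hpdown : pdown ∈ S) (hpup_opt : ∀ q ∈ S, M (μup * q) ≤ M (μup * pup)) :
    M (μ * p) ∈ Set.Icc (M (μdown * pdown)) (M (μup * pup)) :=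
  ⟨(hM.apply_mul_le_apply_mul hμdown hdown (hS hpdown)).trans (hp_opt pdown hpdown),
    (hM.apply_mul_le_apply_mul (hμdown.trans hdown) hup (hS hp)).trans (hpup_opt p hp)⟩

end Welfare

theorem ENNReal.natCast_mul_ofReal_div_le (n : ℕ) (δ : ℝ) :
    (n : ENNReal) * ENNReal.ofReal (δ / n) ≤ ENNReal.ofReal δ := by
  rcases Nat.eq_zero_or_pos n with rfl | hn
  · simp
  · rw [← ENNReal.ofReal_natCast, ← ENNReal.ofReal_mul (by positivity),
      mul_div_cancel₀ δ (by positivity)]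

theorem stmt_1_general {Ω : Type*} [MeasurableSpace Ω] (P : MeasureTheory.Measure Ω)
    {n : ℕ} (k : ℕ)
    (δ : ℝ)
    (M : (Fin n → ℝ) → ℝ)
    (hM : ∀ v v' : Fin n → ℝ, (∀ i, 0 ≤ v i) → (∀ i, 0 ≤ v' i) →
      (∀ i, v i ≤ v' i) → M v ≤ M v')
    (μ : Fin n → ℝ)
    (pstar : Fin n → ℝ) (hpstar : pstar ∈ Pk n k)
    (hpstar_opt : ∀ p ∈ Pk n k, M (fun i => μ i * p i) ≤ M (fun i => μ i * pstar i))
    (μdown μup : ℕ → Ω → Fin n → ℝ)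
    (hnn_down : ∀ t ω i, 0 ≤ μdown t ω i)
    (pdown pup : ℕ → Ω → Fin n → ℝ)
    (hpdown_mem : ∀ t ω, pdown t ω ∈ Pk n k)
    (hpup_opt : ∀ t ω, ∀ p ∈ Pk n k,
      M (fun i => μup t ω i * p i) ≤ M (fun i => μup t ω i * pup t ω i))
    (hCS : ∀ i : Fin n,
      P {ω | ∃ t : ℕ, μ i ∉ Set.Icc (μdown t ω i) (μup t ω i)} ≤ ENNReal.ofReal (δ / n)) :
    P {ω | ∃ t : ℕ, M (fun i => μ i * pstar i) ∉
        Set.Icc (M (fun i => μdown t ω i * pdown t ω i))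
                (M (fun i => μup t ω i * pup t ω i))}
      ≤ ENNReal.ofReal δ := by
  have hM' : MonotoneOn M (Set.Ici 0) := fun v hv v' hv' hvv' => hM v v' hv hv' hvv'
  have hsub : {ω | ∃ t : ℕ, M (fun i => μ i * pstar i) ∉
        Set.Icc (M (fun i => μdown t ω i * pdown t ω i)) (M (fun i => μup t ω i * pup t ω i))}
      ⊆ ⋃ i, {ω | ∃ t : ℕ, μ i ∉ Set.Icc (μdown t ω i) (μup t ω i)} := by
    rintro ω ⟨t, ht⟩
    by_contra hgood
    simp only [Set.mem_iUnion, Set.mem_ofPred_eq, not_exists, not_not] at hgood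
    exact ht <| hM'.optimal_value_mem_Icc (Pk_subset_Ici_zero n k) (hnn_down t ω)
      (fun i => (hgood i t).1) (fun i => (hgood i t).2) hpstar hpstar_opt
      (hpdown_mem t ω) (hpup_opt t ω)
  calc _ ≤ P (⋃ i, {ω | ∃ t : ℕ, μ i ∉ Set.Icc (μdown t ω i) (μup t ω i)}) :=
        MeasureTheory.measure_mono hsub
    _ ≤ ∑ i, P {ω | ∃ t : ℕ, μ i ∉ Set.Icc (μdown t ω i) (μup t ω i)} :=
        MeasureTheory.measure_iUnion_fintype_le P _
    _ ≤ ∑ _i : Fin n, ENNReal.ofReal (δ / n) := Finset.sum_le_sum fun i _ => hCS i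
    _ ≤ ENNReal.ofReal δ := by
        simpa using ENNReal.natCast_mul_ofReal_div_le n δ

theorem stmt_1 {Ω : Type*} [MeasurableSpace Ω] (P : MeasureTheory.Measure Ω)
    [MeasureTheory.IsProbabilityMeasure P]
    {n : ℕ} (hn : 0 < n) (k : ℕ) (hk : k ≤ n)
    (δ : ℝ) (hδ : δ ∈ Set.Ioo (0 : ℝ) 1)
    (M : (Fin n → ℝ) → ℝ)
    (hM : ∀ v v' : Fin n → ℝ, (∀ i, 0 ≤ v i) → (∀ i, 0 ≤ v' i) →
      (∀ i, v i ≤ v' i) → M v ≤ M v')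
    (μ : Fin n → ℝ) (hμ : ∀ i, 0 ≤ μ i)
    (pstar : Fin n → ℝ) (hpstar : pstar ∈ Pk n k)
    (hpstar_opt : ∀ p ∈ Pk n k, M (fun i => μ i * p i) ≤ M (fun i => μ i * pstar i))
    (μdown μup : ℕ → Ω → Fin n → ℝ)
    (hmeas_down : ∀ t, Measurable (μdown t)) (hmeas_up : ∀ t, Measurable (μup t))
    (hnn_down : ∀ t ω i, 0 ≤ μdown t ω i) (hnn_up : ∀ t ω i, 0 ≤ μup t ω i)
    (pdown pup : ℕ → Ω → Fin n → ℝ)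
    (hmeas_pdown : ∀ t, Measurable (pdown t)) (hmeas_pup : ∀ t, Measurable (pup t))
    (hpdown_mem : ∀ t ω, pdown t ω ∈ Pk n k) (hpup_mem : ∀ t ω, pup t ω ∈ Pk n k)
    (hpdown_opt : ∀ t ω, ∀ p ∈ Pk n k,
      M (fun i => μdown t ω i * p i) ≤ M (fun i => μdown t ω i * pdown t ω i))
    (hpup_opt : ∀ t ω, ∀ p ∈ Pk n k,
      M (fun i => μup t ω i * p i) ≤ M (fun i => μup t ω i * pup t ω i))
    (hCS : ∀ i : Fin n,
      P {ω | ∃ t : ℕ, μ i ∉ Set.Icc (μdown t ω i) (μup t ω i)} ≤ ENNReal.ofReal (δ / n)) :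
    P {ω | ∃ t : ℕ, M (fun i => μ i * pstar i) ∉
        Set.Icc (M (fun i => μdown t ω i * pdown t ω i))
                (M (fun i => μup t ω i * pup t ω i))}
      ≤ ENNReal.ofReal δ :=
  stmt_1_general P k δ M hM μ pstar hpstar hpstar_opt μdown μup hnn_down pdown pup hpdown_mem
    hpup_opt hCS
end

section
/- Let n ≥ 1, let 0 < v_min ≤ v_max, let w ∈ ℝ^n with w_i > 0 for all i and ∑_i w_i = 1, and let q ∈ (−∞, 0) ∪ (0, 1]. Define M(v) = (∑_i w_i v_i^q)^{1/q}. Then for all v, v' ∈ [v_min, v_max]^n, |M(v) − M(v')| ≤ (v_max / v_min) · max_i |v_i − v'_i|; i.e., M is Lipschitz continuous on the box [v_min, v_max]^n with respect to the ℓ∞ norm with constant v_max / v_min. -/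
open Finset in
lemma wpm_mono_homog {n : ℕ} (hn : 0 < n) (w : Fin n → ℝ) (hw : ∀ i, 0 < w i)
    (q : ℝ) (hq : q < 0 ∨ (0 < q ∧ q ≤ 1)) (c : ℝ) (hc : 0 < c)
    (v v' : Fin n → ℝ) (hv : ∀ i, 0 < v i) (hv' : ∀ i, 0 < v' i)
    (h : ∀ i, v i ≤ c * v' i) :
    (∑ i, w i * v i ^ q) ^ (1 / q) ≤ c * (∑ i, w i * v' i ^ q) ^ (1 / q) := by
  have hq0 : q ≠ 0 := by rcases hq with h | h; exacts [h.ne, h.1.ne']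
  have hS' : (0:ℝ) ≤ ∑ i, w i * v' i ^ q :=
    Finset.sum_nonneg fun i _ => mul_nonneg (hw i).le (Real.rpow_nonneg (hv' i).le q)
  have key : c * (∑ i, w i * v' i ^ q) ^ (1 / q)
      = (∑ i, w i * (c * v' i) ^ q) ^ (1 / q) := by
    have : ∑ i, w i * (c * v' i) ^ q = c ^ q * ∑ i, w i * v' i ^ q := by
      rw [Finset.mul_sum]
      refine Finset.sum_congr rfl fun i _ => ?_
      rw [Real.mul_rpow hc.le (hv' i).le]; ring
    have hcq : (c ^ q : ℝ) ^ (1 / q) = c := by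
      rw [← Real.rpow_mul hc.le, mul_one_div, div_self hq0, Real.rpow_one]
    rw [this, Real.mul_rpow (Real.rpow_nonneg hc.le q) hS', hcq]
  rw [key]
  rcases hq with hqneg | ⟨hqpos, _⟩
  · have hsum : ∑ i, w i * (c * v' i) ^ q ≤ ∑ i, w i * v i ^ q := by
      refine Finset.sum_le_sum fun i _ => ?_
      exact mul_le_mul_of_nonneg_left
        (Real.rpow_le_rpow_of_nonpos (hv i) (h i) hqneg.le) (hw i).le
    have hpos : (0:ℝ) < ∑ i, w i * (c * v' i) ^ q := by
      refine Finset.sum_pos (fun i _ => mul_pos (hw i)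
        (Real.rpow_pos_of_pos (mul_pos hc (hv' i)) q)) ⟨⟨0, hn⟩, Finset.mem_univ _⟩
    exact Real.rpow_le_rpow_of_nonpos hpos hsum
      (le_of_lt (one_div_neg.mpr hqneg))
  · have hsum : ∑ i, w i * v i ^ q ≤ ∑ i, w i * (c * v' i) ^ q := by
      refine Finset.sum_le_sum fun i _ => ?_
      exact mul_le_mul_of_nonneg_left
        (Real.rpow_le_rpow (hv i).le (h i) hqpos.le) (hw i).le
    exact Real.rpow_le_rpow (Finset.sum_nonneg fun i _ =>
      mul_nonneg (hw i).le (Real.rpow_nonneg (hv i).le q)) hsum (by positivity)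

theorem stmt_9 {n : ℕ} (hn : 0 < n) (vmin vmax : ℝ) (hvmin : 0 < vmin) (hle : vmin ≤ vmax)
    (w : Fin n → ℝ) (hw : ∀ i, 0 < w i) (hw1 : ∑ i, w i = 1)
    (q : ℝ) (hq : q < 0 ∨ (0 < q ∧ q ≤ 1))
    (v v' : Fin n → ℝ)
    (hv : ∀ i, v i ∈ Set.Icc vmin vmax) (hv' : ∀ i, v' i ∈ Set.Icc vmin vmax) :
    |(∑ i, w i * v i ^ q) ^ (1 / q) - (∑ i, w i * v' i ^ q) ^ (1 / q)|
      ≤ (vmax / vmin) *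
        Finset.univ.sup' ⟨⟨0, hn⟩, Finset.mem_univ _⟩ (fun i => |v i - v' i|) := by
  classical
  have hq0 : q ≠ 0 := by rcases hq with h | h; exacts [h.ne, h.1.ne']
  set δ : ℝ := Finset.univ.sup' ⟨⟨0, hn⟩, Finset.mem_univ _⟩ (fun i => |v i - v' i|) with hδdef
  have hδ0 : 0 ≤ δ := le_trans (abs_nonneg (v ⟨0, hn⟩ - v' ⟨0, hn⟩))
    (Finset.le_sup' (fun j => |v j - v' j|) (Finset.mem_univ ⟨0, hn⟩))
  have hvpos : ∀ i, 0 < v i := fun i => lt_of_lt_of_le hvmin (hv i).1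
  have hv'pos : ∀ i, 0 < v' i := fun i => lt_of_lt_of_le hvmin (hv' i).1
  set c : ℝ := 1 + δ / vmin with hcdef
  have hc : 0 < c := by positivity
  have bound : ∀ u u' : Fin n → ℝ, (∀ i, 0 < u i) → (∀ i, vmin ≤ u' i) →
      (∀ i, u' i ≤ vmax) → (∀ i, u i ≤ u' i + δ) →
      (∑ i, w i * u i ^ q) ^ (1 / q) - (∑ i, w i * u' i ^ q) ^ (1 / q)
        ≤ vmax / vmin * δ := by
    intro u u' hu hu'lo hu'hi hdiff
    have hu'pos : ∀ i, 0 < u' i := fun i => lt_of_lt_of_le hvmin (hu'lo i)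
    have h1 : ∀ i, u i ≤ c * u' i := by
      intro i
      have : δ ≤ δ / vmin * u' i := by
        calc δ = δ / vmin * vmin := by field_simp
        _ ≤ δ / vmin * u' i := by
          exact mul_le_mul_of_nonneg_left (hu'lo i) (by positivity)
      calc u i ≤ u' i + δ := hdiff i
      _ ≤ u' i + δ / vmin * u' i := by linarith
      _ = c * u' i := by ring
    have h2 := wpm_mono_homog hn w hw q hq c hc u u' hu hu'pos h1
    have h3 : (∑ i, w i * u' i ^ q) ^ (1 / q) ≤ vmax := by
      have := wpm_mono_homog hn w hw q hq vmax (lt_of_lt_of_le hvmin hle) u'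
        (fun _ => 1) hu'pos (fun _ => one_pos)
        (fun i => by simpa using hu'hi i)
      simpa [hw1] using this
    have h4 : (0:ℝ) ≤ (∑ i, w i * u' i ^ q) ^ (1 / q) :=
      Real.rpow_nonneg (Finset.sum_nonneg fun i _ =>
        mul_nonneg (hw i).le (Real.rpow_nonneg (hu'pos i).le q)) _
    have : c * (∑ i, w i * u' i ^ q) ^ (1 / q)
        = (∑ i, w i * u' i ^ q) ^ (1 / q) + δ / vmin * (∑ i, w i * u' i ^ q) ^ (1 / q) := by
      ring
    have h5 : δ / vmin * (∑ i, w i * u' i ^ q) ^ (1 / q) ≤ δ / vmin * vmax :=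
      mul_le_mul_of_nonneg_left h3 (by positivity)
    have h6 : δ / vmin * vmax = vmax / vmin * δ := by ring
    nlinarith [h2, h5]
  have habs : ∀ i, |v i - v' i| ≤ δ := fun i => Finset.le_sup' (fun j => |v j - v' j|) (Finset.mem_univ i)
  have hd1 : ∀ i, v i ≤ v' i + δ := fun i => by
    have := (abs_le.mp (habs i)).2; linarith
  have hd2 : ∀ i, v' i ≤ v i + δ := fun i => by
    have := (abs_le.mp (habs i)).1; linarith
  rw [abs_sub_le_iff]
  constructor
  · exact bound v v' hvpos (fun i => (hv' i).1) (fun i => (hv' i).2) hd1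
  · exact bound v' v hv'pos (fun i => (hv i).1) (fun i => (hv i).2) hd2
end

section
/- Let n ≥ 1, k ≤ n, let u ∈ ℝ^n with u_i > 0 for all i, and let P_k = {p ∈ [0,1]^n : ∑_i p_i = k}. Suppose λ > 0 and p* ∈ P_k satisfies p*_i = min(1, λ / u_i) for all i (and ∑_i p*_i = k). Then p* maximizes the egalitarian welfare over P_k: for every p ∈ P_k, min_i u_i p_i ≤ min_i u_i p*_i. -/
theorem stmt_13 {n : ℕ} (hn : 0 < n) (k : ℕ) (hk : k ≤ n)
    (u : Fin n → ℝ) (hu : ∀ i, 0 < u i)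
    (lam : ℝ) (hlam : 0 < lam)
    (pstar : Fin n → ℝ) (hpstar : pstar ∈ Pk n k)
    (hform : ∀ i, pstar i = min 1 (lam / u i)) :
    ∀ p ∈ Pk n k,
      Finset.univ.inf' ⟨⟨0, hn⟩, Finset.mem_univ _⟩ (fun i => u i * p i)
        ≤ Finset.univ.inf' ⟨⟨0, hn⟩, Finset.mem_univ _⟩ (fun i => u i * pstar i) := by
  intro p hp
  obtain ⟨hp01, hpsum⟩ := hp
  obtain ⟨hps01, hpssum⟩ := hpstar
  have key : ∀ j, u j * pstar j = min (u j) lam := by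
    intro j
    rw [hform j]
    rcases le_total (u j) lam with h | h
    · rw [min_eq_left h, min_eq_left, mul_one]
      rw [le_div_iff₀ (hu j), one_mul]; exact h
    · rw [min_eq_right h, min_eq_right, mul_div_cancel₀ _ (hu j).ne']
      rw [div_le_one (hu j)]; exact h
  obtain ⟨i0, -, hi0⟩ := Finset.exists_min_image Finset.univ u ⟨⟨0, hn⟩, Finset.mem_univ _⟩
  rcases le_total (u i0) lam with hc | hc
  · calc Finset.univ.inf' ⟨⟨0, hn⟩, Finset.mem_univ _⟩ (fun i => u i * p i)
        ≤ u i0 * p i0 := Finset.inf'_le _ (Finset.mem_univ _)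
      _ ≤ u i0 * 1 := by
          exact mul_le_mul_of_nonneg_left (hp01 i0).2 (hu i0).le
      _ = u i0 := mul_one _
      _ ≤ _ := by
          apply Finset.le_inf'
          intro j _
          rw [key j]
          exact le_min (hi0 j (Finset.mem_univ _)) hc
  · have hle : Finset.univ.inf' ⟨⟨0, hn⟩, Finset.mem_univ _⟩ (fun i => u i * p i) ≤ lam := by
      by_contra hcon
      push_neg at hcon
      have hlt : ∀ j, pstar j < p j := by
        intro j
        have h1 : lam < u j * p j :=
          lt_of_lt_of_le hcon (Finset.inf'_le _ (Finset.mem_univ _))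
        have h2 : lam ≤ u j := le_trans hc (hi0 j (Finset.mem_univ _))
        rw [hform j, min_eq_right (by rw [div_le_one (hu j)]; exact h2)]
        rw [div_lt_iff₀ (hu j), mul_comm]
        exact h1
      have : ∑ i, pstar i < ∑ i, p i :=
        Finset.sum_lt_sum_of_nonempty ⟨⟨0, hn⟩, Finset.mem_univ _⟩
          (fun j _ => hlt j)
      rw [hpssum, hpsum] at this
      exact lt_irrefl _ this
    refine le_trans hle ?_
    apply Finset.le_inf'
    intro j _
    rw [key j]
    exact le_min (le_trans hc (hi0 j (Finset.mem_univ _))) le_rfl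
end

section
/- Let n ≥ 1, k ≤ n, let u, w ∈ ℝ^n with u_i > 0 and w_i > 0 for all i, let q ∈ (0,1), and let P_k = {p ∈ [0,1]^n : ∑_i p_i = k}. Suppose λ > 0 and p* ∈ P_k satisfies p*_i = min(1, λ · (w_i u_i^q)^{1/(1−q)}) for all i (and ∑_i p*_i = k). Then p* maximizes the weighted power mean welfare over P_k: for every p ∈ P_k, (∑_i w_i (u_i p_i)^q)^{1/q} ≤ (∑_i w_i (u_i p*_i)^q)^{1/q}. -/
/-!
Each summand `A_i p_i^q` with `A_i = w_i u_i^q` is concave in `p_i`, so it lies below its tangent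
line at `p*_i`. The slope there is `q A_i (p*_i)^(q-1)`, which equals the common multiplier
`q λ^(q-1)` when `p*_i < 1` and is at least that multiplier when `p*_i = 1` (where
`p_i - p*_i ≤ 0`).
Hence `A_i p_i^q ≤ A_i (p*_i)^q + q λ^(q-1) (p_i - p*_i)`, and summing kills the linear terms
because `∑ p_i = ∑ p*_i`.
-/

open Finset Real

lemma rpow_le_rpow_add_mul_sub {q a x : ℝ} (hq0 : 0 ≤ q) (hq1 : q ≤ 1) (ha : 0 < a)
    (hx : 0 ≤ x) : x ^ q ≤ a ^ q + q * a ^ (q - 1) * (x - a) := by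
  have hbernoulli : (x / a) ^ q ≤ 1 + q * (x / a - 1) := by
    simpa using rpow_one_add_le_one_add_mul_self (s := x / a - 1)
      (by linarith [div_nonneg hx ha.le]) hq0 hq1
  calc x ^ q = a ^ q * (x / a) ^ q := by
        rw [← mul_rpow ha.le (div_nonneg hx ha.le), mul_div_cancel₀ _ ha.ne']
    _ ≤ a ^ q * (1 + q * (x / a - 1)) := by gcongr
    _ = a ^ q + q * a ^ (q - 1) * (x - a) := by
        rw [rpow_sub ha, rpow_one]
        field_simp

section WaterFilling

variable {A lam q : ℝ}

lemma mul_rpow_water_level (hA : 0 < A) (hlam : 0 < lam) (hq1 : q < 1) :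
    A * (lam * A ^ (1 / (1 - q))) ^ (q - 1) = lam ^ (q - 1) := by
  have hexp : 1 / (1 - q) * (q - 1) = -1 := by
    field_simp [(sub_pos.2 hq1).ne']
    ring
  rw [mul_rpow hlam.le (by positivity), ← rpow_mul hA.le, hexp, rpow_neg_one]
  field_simp

lemma rpow_sub_one_le_of_one_le_water_level (hA : 0 < A) (hlam : 0 < lam) (hq1 : q < 1)
    (hlevel : 1 ≤ lam * A ^ (1 / (1 - q))) : lam ^ (q - 1) ≤ A := by
  rw [← mul_rpow_water_level hA hlam hq1]
  exact mul_le_of_le_one_right hA.le (rpow_le_one_of_one_le_of_nonpos hlevel (by linarith))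

lemma mul_rpow_sub_one_mul_le_clipped (hA : 0 < A) (hlam : 0 < lam) (hq1 : q < 1)
    {x : ℝ} (hx : x ≤ 1) :
    let c := min 1 (lam * A ^ (1 / (1 - q)))
    A * c ^ (q - 1) * (x - c) ≤ lam ^ (q - 1) * (x - c) := by
  intro c
  rcases le_total 1 (lam * A ^ (1 / (1 - q))) with hlevel | hlevel
  · have hc : c = 1 := min_eq_left hlevel
    rw [hc, one_rpow, mul_one]
    exact mul_le_mul_of_nonpos_right
      (rpow_sub_one_le_of_one_le_water_level hA hlam hq1 hlevel) (by linarith)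
  · have hc : c = lam * A ^ (1 / (1 - q)) := min_eq_right hlevel
    rw [hc, mul_rpow_water_level hA hlam hq1]

lemma mul_rpow_le_clipped_add (hA : 0 < A) (hlam : 0 < lam) (hq0 : 0 < q) (hq1 : q < 1)
    {x : ℝ} (hx0 : 0 ≤ x) (hx1 : x ≤ 1) :
    let c := min 1 (lam * A ^ (1 / (1 - q)))
    A * x ^ q ≤ A * c ^ q + q * lam ^ (q - 1) * (x - c) := by
  intro c
  have hc : 0 < c := lt_min one_pos (by positivity)
  have hslope := mul_rpow_sub_one_mul_le_clipped hA hlam hq1 hx1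
  calc A * x ^ q ≤ A * (c ^ q + q * c ^ (q - 1) * (x - c)) := by
        gcongr
        exact rpow_le_rpow_add_mul_sub hq0.le hq1.le hc hx0
    _ = A * c ^ q + q * (A * c ^ (q - 1) * (x - c)) := by ring
    _ ≤ A * c ^ q + q * (lam ^ (q - 1) * (x - c)) := by gcongr
    _ = A * c ^ q + q * lam ^ (q - 1) * (x - c) := by ring

theorem sum_mul_rpow_le_of_water_filling {ι : Type*} [Fintype ι] {A c x : ι → ℝ}
    (hA : ∀ i, 0 < A i) (hlam : 0 < lam) (hq0 : 0 < q) (hq1 : q < 1)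
    (hc : ∀ i, c i = min 1 (lam * A i ^ (1 / (1 - q))))
    (hx : ∀ i, 0 ≤ x i ∧ x i ≤ 1) (hsum : ∑ i, x i = ∑ i, c i) :
    ∑ i, A i * x i ^ q ≤ ∑ i, A i * c i ^ q := by
  calc ∑ i, A i * x i ^ q
      ≤ ∑ i, (A i * c i ^ q + q * lam ^ (q - 1) * (x i - c i)) := by
        refine sum_le_sum fun i _ => ?_
        rw [hc i]
        exact mul_rpow_le_clipped_add (hA i) hlam hq0 hq1 (hx i).1 (hx i).2
    _ = ∑ i, A i * c i ^ q + q * lam ^ (q - 1) * (∑ i, x i - ∑ i, c i) := by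
        rw [sum_add_distrib, ← mul_sum, sum_sub_distrib]
    _ = ∑ i, A i * c i ^ q := by rw [hsum, sub_self, mul_zero, add_zero]

end WaterFilling

theorem stmt_14_general {n : ℕ} (k : ℕ)
    (u w : Fin n → ℝ) (hu : ∀ i, 0 < u i) (hw : ∀ i, 0 < w i)
    (q : ℝ) (hq : q ∈ Set.Ioo (0 : ℝ) 1)
    (lam : ℝ) (hlam : 0 < lam)
    (pstar : Fin n → ℝ) (hpstar : pstar ∈ Pk n k)
    (hform : ∀ i, pstar i = min 1 (lam * (w i * u i ^ q) ^ (1 / (1 - q)))) :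
    ∀ p ∈ Pk n k,
      (∑ i, w i * (u i * p i) ^ q) ^ (1 / q)
        ≤ (∑ i, w i * (u i * pstar i) ^ q) ^ (1 / q) := by
  rintro p ⟨hp, hpsum⟩
  obtain ⟨hpstar01, hpstarsum⟩ := hpstar
  have hsplit : ∀ x : Fin n → ℝ, (∀ i, 0 ≤ x i) →
      ∑ i, w i * (u i * x i) ^ q = ∑ i, w i * u i ^ q * x i ^ q := fun x hx =>
    sum_congr rfl fun i _ => by rw [mul_rpow (hu i).le (hx i), mul_assoc]
  have hwelfare := sum_mul_rpow_le_of_water_filling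
    (fun i => mul_pos (hw i) (rpow_pos_of_pos (hu i) q)) hlam hq.1 hq.2 hform hp
    (hpsum.trans hpstarsum.symm)
  rw [← hsplit p fun i => (hp i).1, ← hsplit pstar fun i => (hpstar01 i).1] at hwelfare
  exact rpow_le_rpow
    (sum_nonneg fun i _ => mul_nonneg (hw i).le (rpow_nonneg (mul_nonneg (hu i).le (hp i).1) q))
    hwelfare (one_div_nonneg.2 hq.1.le)

theorem stmt_14 {n : ℕ} (hn : 0 < n) (k : ℕ) (hk : k ≤ n)
    (u w : Fin n → ℝ) (hu : ∀ i, 0 < u i) (hw : ∀ i, 0 < w i)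
    (q : ℝ) (hq : q ∈ Set.Ioo (0 : ℝ) 1)
    (lam : ℝ) (hlam : 0 < lam)
    (pstar : Fin n → ℝ) (hpstar : pstar ∈ Pk n k)
    (hform : ∀ i, pstar i = min 1 (lam * (w i * u i ^ q) ^ (1 / (1 - q)))) :
    ∀ p ∈ Pk n k,
      (∑ i, w i * (u i * p i) ^ q) ^ (1 / q)
        ≤ (∑ i, w i * (u i * pstar i) ^ q) ^ (1 / q) :=
  stmt_14_general k u w hu hw q hq lam hlam pstar hpstar hform
end

section
/- Let n ≥ 1, k ≤ n, let u, w ∈ ℝ^n with u_i > 0 and w_i > 0 for all i, let q < 0, and let P_k = {p ∈ [0,1]^n : ∑_i p_i = k}. Suppose η ∈ ℝ and p* ∈ P_k satisfies p*_i = min(1, max(0, (η + log(w_i u_i)) / (−q · u_i))) for all i (and ∑_i p*_i = k). Then p* maximizes the Kolm welfare over P_k: for every p ∈ P_k, (1/q)·log(∑_i w_i exp(q u_i p_i)) ≤ (1/q)·log(∑_i w_i exp(q u_i p*_i)). -/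
/-!
The welfare is `(1/q) log S(p)` with `q < 0`, so it suffices to show that `p*` minimises
`S(p) = ∑ fᵢ(pᵢ)`, where `fᵢ(t) = wᵢ exp(q uᵢ t)` is convex with increasing derivative `gᵢ`.
The unclipped point `xᵢ = (η + log(wᵢuᵢ))/(-q uᵢ)` is exactly where `gᵢ(xᵢ) = q e^{-η}`, a value
independent of `i`. Since `p*ᵢ` is the projection of `xᵢ` onto `[0,1]` and `gᵢ` is monotone,
`(gᵢ(p*ᵢ) - q e^{-η})(pᵢ - p*ᵢ) ≥ 0` for every feasible `p` (the KKT conditions); summing,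
the multiplier term vanishes because `∑ pᵢ = ∑ p*ᵢ`, and the tangent-line inequalities
`gᵢ(p*ᵢ)(pᵢ - p*ᵢ) ≤ fᵢ(pᵢ) - fᵢ(p*ᵢ)` give `S(p*) ≤ S(p)`.
-/

open Real Finset

theorem Monotone.sub_mul_sub_clamp_nonneg {g : ℝ → ℝ} (hg : Monotone g) {a b x p : ℝ}
    (hap : a ≤ p) (hpb : p ≤ b) :
    0 ≤ (g (min b (max a x)) - g x) * (p - min b (max a x)) := by
  rcases le_total b x with hbx | hxb
  · rw [min_eq_left (hbx.trans (le_max_right a x))]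
    exact mul_nonneg_of_nonpos_of_nonpos (sub_nonpos.2 (hg hbx)) (sub_nonpos.2 hpb)
  rcases le_total x a with hxa | hax
  · rw [max_eq_left hxa, min_eq_right (hap.trans hpb)]
    exact mul_nonneg (sub_nonneg.2 (hg hxa)) (sub_nonneg.2 hap)
  · rw [max_eq_right hax, min_eq_right hxb, sub_self, zero_mul]

theorem sum_le_sum_of_tangent_of_kkt {ι : Type*} (s : Finset ι) (f g : ι → ℝ → ℝ)
    (p p' : ι → ℝ) (c : ℝ) (hsum : ∑ i ∈ s, p i = ∑ i ∈ s, p' i)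
    (htangent : ∀ i ∈ s, g i (p' i) * (p i - p' i) ≤ f i (p i) - f i (p' i))
    (hkkt : ∀ i ∈ s, 0 ≤ (g i (p' i) - c) * (p i - p' i)) :
    ∑ i ∈ s, f i (p' i) ≤ ∑ i ∈ s, f i (p i) := by
  have hbalanced : ∑ i ∈ s, (p i - p' i) = 0 := by rw [sum_sub_distrib, hsum, sub_self]
  have hfirstOrder : 0 ≤ ∑ i ∈ s, g i (p' i) * (p i - p' i) := by
    have h := sum_nonneg hkkt
    simp only [sub_mul, sum_sub_distrib, ← mul_sum, hbalanced, mul_zero, sub_zero] at h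
    exact h
  have h := sum_le_sum htangent
  rw [sum_sub_distrib] at h
  linarith

theorem exp_mul_sub_le_exp_sub_exp (a b : ℝ) : exp a * (b - a) ≤ exp b - exp a :=
  calc exp a * (b - a) = exp a * (b - a + 1) - exp a := by ring
    _ ≤ exp a * exp (b - a) - exp a := by gcongr; exact add_one_le_exp _
    _ = exp b - exp a := by rw [← exp_add, add_sub_cancel]

section KolmTerm

variable {q u w : ℝ}

theorem mul_exp_tangent_le (hw : 0 ≤ w) (s t : ℝ) :
    q * u * w * exp (q * (u * s)) * (t - s) ≤ w * exp (q * (u * t)) - w * exp (q * (u * s)) :=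
  calc q * u * w * exp (q * (u * s)) * (t - s)
      = w * (exp (q * (u * s)) * (q * (u * t) - q * (u * s))) := by ring
    _ ≤ w * (exp (q * (u * t)) - exp (q * (u * s))) := by
      gcongr; exact exp_mul_sub_le_exp_sub_exp _ _
    _ = w * exp (q * (u * t)) - w * exp (q * (u * s)) := by ring

theorem monotone_mul_exp (hq : q ≤ 0) (hu : 0 ≤ u) (hw : 0 ≤ w) :
    Monotone fun t => q * u * w * exp (q * (u * t)) := by
  intro s t hst
  have hexp : exp (q * (u * t)) ≤ exp (q * (u * s)) :=
    exp_le_exp.2 (mul_le_mul_of_nonpos_left (mul_le_mul_of_nonneg_left hst hu) hq)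
  exact mul_le_mul_of_nonpos_left hexp (mul_nonpos_of_nonpos_of_nonneg
    (mul_nonpos_of_nonpos_of_nonneg hq hu) hw)

theorem mul_exp_waterLevel (hq : q ≠ 0) (hu : 0 < u) (hw : 0 < w) (η : ℝ) :
    q * u * w * exp (q * (u * ((η + log (w * u)) / (-q * u)))) = q * exp (-η) := by
  have hexponent : q * (u * ((η + log (w * u)) / (-q * u))) = -η + -log (w * u) := by
    field_simp
    ring
  rw [hexponent, exp_add, exp_neg (log _), exp_log (mul_pos hw hu)]
  field_simp

end KolmTerm

theorem stmt_15_general {n : ℕ} (hn : 0 < n) (k : ℕ)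
    (u w : Fin n → ℝ) (hu : ∀ i, 0 < u i) (hw : ∀ i, 0 < w i)
    (q : ℝ) (hq : q < 0)
    (η : ℝ)
    (pstar : Fin n → ℝ) (hpstar : pstar ∈ Pk n k)
    (hform : ∀ i, pstar i = min 1 (max 0 ((η + Real.log (w i * u i)) / (-q * u i)))) :
    ∀ p ∈ Pk n k,
      (1 / q) * Real.log (∑ i, w i * Real.exp (q * (u i * p i)))
        ≤ (1 / q) * Real.log (∑ i, w i * Real.exp (q * (u i * pstar i))) := by
  rintro p ⟨hp01, hpsum⟩
  have hsum : ∑ i, w i * exp (q * (u i * pstar i)) ≤ ∑ i, w i * exp (q * (u i * p i)) := by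
    refine sum_le_sum_of_tangent_of_kkt univ (fun i t => w i * exp (q * (u i * t)))
      (fun i t => q * u i * w i * exp (q * (u i * t))) p pstar (q * exp (-η))
      (hpsum.trans hpstar.2.symm) (fun i _ => mul_exp_tangent_le (hw i).le _ _) (fun i _ => ?_)
    rw [hform i, ← mul_exp_waterLevel hq.ne (hu i) (hw i) η]
    exact (monotone_mul_exp hq.le (hu i).le (hw i).le).sub_mul_sub_clamp_nonneg
      (hp01 i).1 (hp01 i).2
  have hpos : 0 < ∑ i, w i * exp (q * (u i * pstar i)) :=
    sum_pos (fun i _ => mul_pos (hw i) (exp_pos _)) (univ_nonempty_iff.2 ⟨⟨0, hn⟩⟩)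
  exact mul_le_mul_of_nonpos_left (log_le_log hpos hsum) (one_div_nonpos.2 hq.le)

theorem stmt_15 {n : ℕ} (hn : 0 < n) (k : ℕ) (hk : k ≤ n)
    (u w : Fin n → ℝ) (hu : ∀ i, 0 < u i) (hw : ∀ i, 0 < w i)
    (q : ℝ) (hq : q < 0)
    (η : ℝ)
    (pstar : Fin n → ℝ) (hpstar : pstar ∈ Pk n k)
    (hform : ∀ i, pstar i = min 1 (max 0 ((η + Real.log (w i * u i)) / (-q * u i)))) :
    ∀ p ∈ Pk n k,
      (1 / q) * Real.log (∑ i, w i * Real.exp (q * (u i * p i)))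
        ≤ (1 / q) * Real.log (∑ i, w i * Real.exp (q * (u i * pstar i))) :=
  stmt_15_general hn k u w hu hw q hq η pstar hpstar hform
end

section
/- Let n ≥ 1, k ≤ n, let μ ∈ ℝ^n with 0 < μ_1 ≤ μ_2 ≤ … ≤ μ_n, and let w ∈ ℝ^n with w_1 ≥ w_2 ≥ … ≥ w_n ≥ 0. Let P_k = {p ∈ [0,1]^n : ∑_i p_i = k}, and for v ∈ ℝ^n let v_(i) denote the i-th smallest coordinate of v. Then there exists p* ∈ P_k maximizing p ↦ ∑_i w_i (μ ⊙ p)_(i) over P_k such that μ_1 p*_1 ≤ μ_2 p*_2 ≤ … ≤ μ_n p*_n; that is, some optimal allocation makes the ex-ante utilities μ_i p*_i nondecreasing in the same order as the μ_i. -/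
/-- `orderStat v i` is the `i`-th smallest coordinate of `v`. -/
noncomputable def orderStat {n : ℕ} (v : Fin n → ℝ) (i : Fin n) : ℝ :=
  v (Tuple.sort v i)

/-- Chain adjacent inequalities to get monotonicity on `Fin n`. -/
lemma aux_chain_mono {n : ℕ} (g : Fin n → ℝ)
    (h : ∀ (m : ℕ) (hm : m + 1 < n), g ⟨m, Nat.lt_of_succ_lt hm⟩ ≤ g ⟨m + 1, hm⟩) :
    ∀ i j : Fin n, i ≤ j → g i ≤ g j := by
  intro i j hij
  have key : ∀ m, (i : ℕ) ≤ m → ∀ hm : m < n, g i ≤ g ⟨m, hm⟩ := by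
    refine Nat.le_induction ?_ ?_
    · intro hm
      have : (⟨(i : ℕ), hm⟩ : Fin n) = i := by ext; rfl
      rw [this]
    · intro m him ih hm
      exact le_trans (ih (Nat.lt_of_succ_lt hm)) (h m hm)
  have := key (j : ℕ) hij j.2
  simpa using this

lemma aux_orderStat_of_monotone {n : ℕ} (v : Fin n → ℝ) (hv : Monotone v) (i : Fin n) :
    orderStat v i = v i := by
  unfold orderStat
  rw [Tuple.sort_eq_refl_iff_monotone.2 hv]
  rfl

lemma aux_orderStat_mono {n : ℕ} (v : Fin n → ℝ) {i j : Fin n} (hij : i ≤ j) :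
    orderStat v i ≤ orderStat v j :=
  Tuple.monotone_sort v hij

/-- The `i`-th order statistic of `v` is at most `u i` when `v ≤ u` pointwise and `u` is
monotone. -/
lemma aux_orderStat_le {n : ℕ} (v u : Fin n → ℝ) (hu : Monotone u) (h : ∀ j, v j ≤ u j)
    (i : Fin n) : orderStat v i ≤ u i := by
  set σ := Tuple.sort v with hσ
  have hex : ∃ l : Fin n, i ≤ l ∧ σ l ≤ i := by
    by_contra hcon
    push_neg at hcon
    have hsub : (Finset.Ici i).image σ ⊆ Finset.Ioi i := by
      intro x hx
      simp only [Finset.mem_image, Finset.mem_Ici] at hx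
      obtain ⟨l, hl, rfl⟩ := hx
      exact Finset.mem_Ioi.2 (hcon l hl)
    have hcard := Finset.card_le_card hsub
    rw [Finset.card_image_of_injective _ σ.injective, Fin.card_Ici, Fin.card_Ioi] at hcard
    have := i.2
    omega
  obtain ⟨l, hil, hli⟩ := hex
  calc orderStat v i ≤ orderStat v l := aux_orderStat_mono v hil
    _ = v (σ l) := rfl
    _ ≤ u (σ l) := h _
    _ ≤ u i := hu hli

lemma aux_min_sub_min_le {d a b : ℝ} (hba : b ≤ a) : min d a - min d b ≤ a - b := by
  rcases le_total d b with h | h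
  · have h1 : min d b = d := min_eq_left h
    have h2 : min d a ≤ d := min_le_left _ _
    linarith
  · have h1 : min d b = b := min_eq_right h
    have h2 : min d a ≤ a := min_le_right _ _
    linarith

/-- The "fill" lemma: any sub-stochastic monotone-utility allocation can be increased to a
monotone-utility allocation with total mass exactly `k`. -/
lemma aux_fill {n k : ℕ} (hk : k ≤ n) (μ : Fin n → ℝ) (hμpos : ∀ i, 0 < μ i)
    (hμmono : ∀ i j : Fin n, i ≤ j → μ i ≤ μ j)
    (q : Fin n → ℝ) (hq0 : ∀ i, 0 ≤ q i) (hq1 : ∀ i, q i ≤ 1)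
    (hqs : ∑ i, q i ≤ (k : ℝ))
    (hqm : ∀ i j : Fin n, i ≤ j → μ i * q i ≤ μ j * q j) :
    ∃ r : Fin n → ℝ, (∀ i, q i ≤ r i) ∧ (∀ i, r i ≤ 1) ∧ (∑ i, r i = (k : ℝ)) ∧
      (∀ i j : Fin n, i ≤ j → μ i * r i ≤ μ j * r j) := by
  set d : ℝ := (k : ℝ) - ∑ i, q i with hd
  have hd0 : 0 ≤ d := by simp only [hd]; linarith
  set R : ℕ → ℝ := fun m => ∑ j ∈ Finset.univ.filter (fun j : Fin n => m ≤ (j : ℕ)), (1 - q j)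
    with hR
  set f : ℕ → ℝ := fun m => min d (R m) with hf
  set r : Fin n → ℝ := fun i => q i + (f (i : ℕ) - f ((i : ℕ) + 1)) with hr
  -- step
  have hstep : ∀ m, ∀ hm : m < n, R m = (1 - q ⟨m, hm⟩) + R (m + 1) := by
    intro m hm
    have hset : Finset.univ.filter (fun j : Fin n => m ≤ (j : ℕ)) =
        insert (⟨m, hm⟩ : Fin n) (Finset.univ.filter (fun j : Fin n => m + 1 ≤ (j : ℕ))) := by
      ext j
      simp only [Finset.mem_filter, Finset.mem_univ, true_and, Finset.mem_insert, Fin.ext_iff]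
      omega
    have hnotmem : (⟨m, hm⟩ : Fin n) ∉
        Finset.univ.filter (fun j : Fin n => m + 1 ≤ (j : ℕ)) := by
      simp
    rw [hR]
    simp only
    rw [hset, Finset.sum_insert hnotmem]
  -- antitone
  have hRanti : ∀ m, R (m + 1) ≤ R m := by
    intro m
    apply Finset.sum_le_sum_of_subset_of_nonneg
    · intro j hj
      simp only [Finset.mem_filter, Finset.mem_univ, true_and] at hj ⊢
      omega
    · intro j _ _
      linarith [hq1 j]
  have hfd : ∀ m, 0 ≤ f m - f (m + 1) := by
    intro m
    have := min_le_min (le_refl d) (hRanti m)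
    simp only [hf]
    linarith
  have hfle : ∀ m, ∀ hm : m < n, f m - f (m + 1) ≤ 1 - q ⟨m, hm⟩ := by
    intro m hm
    have h1 := aux_min_sub_min_le (d := d) (hRanti m)
    have h2 := hstep m hm
    simp only [hf]
    linarith
  -- bounds on r
  have hrge : ∀ i, q i ≤ r i := by
    intro i
    simp only [hr]
    linarith [hfd (i : ℕ)]
  have hrle : ∀ i, r i ≤ 1 := by
    intro i
    have := hfle (i : ℕ) i.2
    simp only [hr]
    have : f (i : ℕ) - f ((i : ℕ) + 1) ≤ 1 - q ⟨(i : ℕ), i.2⟩ := this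
    simp only [Fin.eta] at this
    linarith
  -- sum
  have hR0 : R 0 = (n : ℝ) - ∑ i, q i := by
    have : Finset.univ.filter (fun j : Fin n => 0 ≤ (j : ℕ)) = Finset.univ := by
      ext j; simp
    rw [hR]
    simp only
    rw [this, Finset.sum_sub_distrib, Finset.sum_const, Finset.card_univ, Fintype.card_fin]
    simp
  have hRn : R n = 0 := by
    have : Finset.univ.filter (fun j : Fin n => n ≤ (j : ℕ)) = ∅ := by
      ext j
      simp only [Finset.mem_filter, Finset.mem_univ, true_and, Finset.notMem_empty, iff_false]
      omega
    rw [hR]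
    simp only
    rw [this, Finset.sum_empty]
  have hf0 : f 0 = d := by
    rw [hf]
    simp only
    rw [hR0]
    apply min_eq_left
    have : (k : ℝ) ≤ (n : ℝ) := by exact_mod_cast hk
    linarith
  have hfn : f n = 0 := by
    rw [hf]
    simp only
    rw [hRn]
    exact min_eq_right hd0
  have hsum : ∑ i, r i = (k : ℝ) := by
    have h1 : ∑ i : Fin n, (f (i : ℕ) - f ((i : ℕ) + 1)) = f 0 - f n := by
      rw [Fin.sum_univ_eq_sum_range (fun m => f m - f (m + 1)) n]
      exact Finset.sum_range_sub' f n
    simp only [hr]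
    rw [Finset.sum_add_distrib, h1, hf0, hfn]
    simp only [hd]
    ring
  -- monotonicity of utilities
  have hmono : ∀ i j : Fin n, i ≤ j → μ i * r i ≤ μ j * r j := by
    apply aux_chain_mono (fun i => μ i * r i)
    intro m hm
    set i : Fin n := ⟨m, Nat.lt_of_succ_lt hm⟩ with hi
    set i' : Fin n := ⟨m + 1, hm⟩ with hi'
    have hii' : i ≤ i' := by simp [hi, hi', Fin.le_def]
    rcases le_total d (R (m + 1)) with hc | hc
    · -- nothing added at i
      have hfm : f m = d := by
        rw [hf]
        exact min_eq_left (le_trans hc (hRanti m))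
      have hfm1 : f (m + 1) = d := by
        rw [hf]
        exact min_eq_left hc
      have hri : r i = q i := by
        simp only [hr, hi]
        rw [hfm, hfm1]
        ring
      calc μ i * r i = μ i * q i := by rw [hri]
        _ ≤ μ i' * q i' := hqm i i' hii'
        _ ≤ μ i' * r i' := by
            apply mul_le_mul_of_nonneg_left (hrge i') (le_of_lt (hμpos i'))
    · -- i' is filled to 1
      have hfm1 : f (m + 1) = R (m + 1) := by
        rw [hf]
        exact min_eq_right hc
      have hfm2 : f (m + 2) = R (m + 2) := by
        rw [hf]
        exact min_eq_right (le_trans (hRanti (m + 1)) hc)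
      have hri' : r i' = 1 := by
        have hs := hstep (m + 1) hm
        simp only [hr, hi']
        rw [hfm1, hfm2]
        have : q (⟨m + 1, hm⟩ : Fin n) = q i' := by rw [hi']
        rw [show m + 1 + 1 = m + 2 from rfl]
        rw [hs]
        ring
      have h1 : μ i * r i ≤ μ i := by
        nth_rewrite 2 [show μ i = μ i * 1 by ring]
        apply mul_le_mul_of_nonneg_left (hrle i) (le_of_lt (hμpos i))
      calc μ i * r i ≤ μ i := h1
        _ ≤ μ i' := hμmono i i' hii'
        _ = μ i' * r i' := by rw [hri']; ring
  exact ⟨r, hrge, hrle, hsum, hmono⟩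

theorem stmt_16 {n : ℕ} (hn : 0 < n) (k : ℕ) (hk : k ≤ n)
    (μ : Fin n → ℝ) (hμpos : ∀ i, 0 < μ i)
    (hμmono : ∀ i j : Fin n, i ≤ j → μ i ≤ μ j)
    (w : Fin n → ℝ) (hw_anti : ∀ i j : Fin n, i ≤ j → w j ≤ w i) (hw_nn : ∀ i, 0 ≤ w i) :
    ∃ pstar ∈ Pk n k,
      (∀ p ∈ Pk n k,
        ∑ i, w i * orderStat (fun j => μ j * p j) i
          ≤ ∑ i, w i * orderStat (fun j => μ j * pstar j) i) ∧
      (∀ i j : Fin n, i ≤ j → μ i * pstar i ≤ μ j * pstar j) := by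
  classical
  -- the compact set of monotone-utility policies
  set S : Set (Fin n → ℝ) :=
    {p | (∀ i, 0 ≤ p i ∧ p i ≤ 1) ∧ ∑ i, p i = (k : ℝ) ∧
      ∀ i j : Fin n, i ≤ j → μ i * p i ≤ μ j * p j} with hS
  -- S is closed
  have hclosed : IsClosed S := by
    have h1 : IsClosed {p : Fin n → ℝ | ∀ i, 0 ≤ p i ∧ p i ≤ 1} := by
      have : {p : Fin n → ℝ | ∀ i, 0 ≤ p i ∧ p i ≤ 1} =
          ⋂ i, ({p : Fin n → ℝ | 0 ≤ p i} ∩ {p | p i ≤ 1}) := by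
        ext p
        simp [Set.mem_iInter, Set.mem_setOf_eq, forall_and]
      rw [this]
      exact isClosed_iInter fun i =>
        (isClosed_le continuous_const (continuous_apply i)).inter
          (isClosed_le (continuous_apply i) continuous_const)
    have h2 : IsClosed {p : Fin n → ℝ | ∑ i, p i = (k : ℝ)} :=
      isClosed_eq (by fun_prop) continuous_const
    have h3 : IsClosed {p : Fin n → ℝ | ∀ i j : Fin n, i ≤ j → μ i * p i ≤ μ j * p j} := by
      have : {p : Fin n → ℝ | ∀ i j : Fin n, i ≤ j → μ i * p i ≤ μ j * p j} =
          ⋂ i, ⋂ j, {p : Fin n → ℝ | i ≤ j → μ i * p i ≤ μ j * p j} := by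
        ext p; simp [Set.mem_iInter]
      rw [this]
      refine isClosed_iInter fun i => isClosed_iInter fun j => ?_
      by_cases hij : i ≤ j
      · simp only [hij, forall_true_left]
        exact isClosed_le (continuous_const.mul (continuous_apply i))
          (continuous_const.mul (continuous_apply j))
      · have : {p : Fin n → ℝ | i ≤ j → μ i * p i ≤ μ j * p j} = Set.univ := by
          ext p; simp [hij]
        rw [this]
        exact isClosed_univ
    have : S = {p : Fin n → ℝ | ∀ i, 0 ≤ p i ∧ p i ≤ 1} ∩
        ({p | ∑ i, p i = (k : ℝ)} ∩ {p | ∀ i j : Fin n, i ≤ j → μ i * p i ≤ μ j * p j}) := by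
      ext p
      simp only [hS, Set.mem_setOf_eq, Set.mem_inter_iff]
    rw [this]
    exact h1.inter (h2.inter h3)
  -- S is compact (closed subset of a compact box)
  have hcompact : IsCompact S := by
    apply IsCompact.of_isClosed_subset (isCompact_Icc (a := (0 : Fin n → ℝ)) (b := 1)) hclosed
    intro p hp
    constructor
    · intro i; exact (hp.1 i).1
    · intro i; exact (hp.1 i).2
  -- S is nonempty
  have hne : S.Nonempty := by
    refine ⟨fun _ => (k : ℝ) / n, ?_, ?_, ?_⟩
    · intro i
      constructor
      · positivity
      · rw [div_le_one (by exact_mod_cast hn)]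
        exact_mod_cast hk
    · rw [Finset.sum_const, Finset.card_univ, Fintype.card_fin, nsmul_eq_mul]
      field_simp
    · intro i j hij
      exact mul_le_mul_of_nonneg_right (hμmono i j hij) (by positivity)
  -- the (linear) objective on S
  set G : (Fin n → ℝ) → ℝ := fun p => ∑ i, w i * (μ i * p i) with hG
  have hGcont : Continuous G := by
    apply continuous_finset_sum
    intro i _
    exact continuous_const.mul (continuous_const.mul (continuous_apply i))
  obtain ⟨pstar, hpstarS, hmax⟩ := hcompact.exists_isMaxOn hne hGcont.continuousOn
  obtain ⟨hpb, hps, hpm⟩ := hpstarS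
  have hpmono : Monotone fun j => μ j * pstar j := fun a b hab => hpm a b hab
  have hμne : ∀ i : Fin n, μ i ≠ 0 := fun i => ne_of_gt (hμpos i)
  have hμMono : Monotone μ := fun a b hab => hμmono a b hab
  -- value of pstar
  have hval : ∑ i, w i * orderStat (fun j => μ j * pstar j) i = G pstar := by
    apply Finset.sum_congr rfl
    intro i _
    rw [aux_orderStat_of_monotone _ hpmono i]
  refine ⟨pstar, ⟨hpb, hps⟩, ?_, hpm⟩
  intro p hp
  obtain ⟨hpb', hps'⟩ := hp
  set v : Fin n → ℝ := fun j => μ j * p j with hv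
  set q : Fin n → ℝ := fun i => orderStat v i / μ i with hq
  have hqval : ∀ i, μ i * q i = orderStat v i := by
    intro i
    simp only [hq]
    rw [mul_comm, div_mul_cancel₀ _ (hμne i)]
  -- bounds on q
  have hq0 : ∀ i, 0 ≤ q i := by
    intro i
    apply div_nonneg _ (le_of_lt (hμpos i))
    show 0 ≤ v (Tuple.sort v i)
    simp only [hv]
    exact mul_nonneg (le_of_lt (hμpos _)) (hpb' _).1
  have hvleμ : ∀ j, v j ≤ μ j := by
    intro j
    simp only [hv]
    exact mul_le_of_le_one_right (le_of_lt (hμpos j)) (hpb' j).2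
  have hq1 : ∀ i, q i ≤ 1 := by
    intro i
    rw [hq]
    simp only
    rw [div_le_one (hμpos i)]
    exact aux_orderStat_le v μ hμMono hvleμ i
  -- sum bound via rearrangement
  have hqs : ∑ i, q i ≤ (k : ℝ) := by
    have hanti : Antivary (fun i => orderStat v i) (fun i : Fin n => (μ i)⁻¹) := by
      intro i j hij
      simp only at hij
      have hμji : μ j < μ i := by
        have h1 : 0 < μ i := hμpos i
        have h2 : 0 < μ j := hμpos j
        by_contra hcon
        push_neg at hcon
        have : (μ j)⁻¹ ≤ (μ i)⁻¹ := by
          exact inv_anti₀ h1 hcon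
        linarith
      have hji : j ≤ i := by
        by_contra hcon
        push_neg at hcon
        exact absurd (hμmono i j (le_of_lt hcon)) (not_le.2 hμji)
      exact aux_orderStat_mono v hji
    have hre := hanti.sum_mul_le_sum_mul_comp_perm (σ := Tuple.sort v)
    have heq : ∑ i, orderStat v i * (μ (Tuple.sort v i))⁻¹ = ∑ i, p i := by
      rw [← Equiv.sum_comp (Tuple.sort v) p]
      apply Finset.sum_congr rfl
      intro i _
      show v (Tuple.sort v i) * (μ (Tuple.sort v i))⁻¹ = p (Tuple.sort v i)
      simp only [hv]
      rw [mul_comm (μ _), mul_assoc, mul_inv_cancel₀ (hμne _), mul_one]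
    have : ∑ i, q i = ∑ i, orderStat v i * (μ i)⁻¹ := by
      apply Finset.sum_congr rfl
      intro i _
      rw [hq]
      simp only
      rw [div_eq_mul_inv]
    rw [this, ← hps', ← heq]
    exact hre
  -- q has monotone utilities
  have hqm : ∀ i j : Fin n, i ≤ j → μ i * q i ≤ μ j * q j := by
    intro i j hij
    rw [hqval i, hqval j]
    exact aux_orderStat_mono v hij
  -- fill q to total mass k
  obtain ⟨r, hrge, hrle, hrsum, hrmono⟩ :=
    aux_fill hk μ hμpos hμmono q hq0 hq1 hqs hqm
  have hrS : r ∈ S := by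
    refine ⟨fun i => ⟨le_trans (hq0 i) (hrge i), hrle i⟩, hrsum, hrmono⟩
  calc ∑ i, w i * orderStat (fun j => μ j * p j) i
      = ∑ i, w i * (μ i * q i) := by
        apply Finset.sum_congr rfl
        intro i _
        rw [hqval i]
    _ ≤ ∑ i, w i * (μ i * r i) := by
        apply Finset.sum_le_sum
        intro i _
        apply mul_le_mul_of_nonneg_left _ (hw_nn i)
        exact mul_le_mul_of_nonneg_left (hrge i) (le_of_lt (hμpos i))
    _ = G r := rfl
    _ ≤ G pstar := hmax hrS
    _ = ∑ i, w i * orderStat (fun j => μ j * pstar j) i := hval.symm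
end

section
/- Let n ≥ 1, k ≤ n, L ≥ 0, and let P_k = {p ∈ [0,1]^n : ∑_i p_i = k}. Let M : ℝ_{≥0}^n → ℝ be monotone (coordinatewise v ≤ v' implies M(v) ≤ M(v')) and L-Lipschitz continuous with respect to the ℓ∞ norm. Let μ, μ↑ ∈ ℝ_{≥0}^n with μ_i ≤ μ↑_i for all i. Suppose p* ∈ P_k maximizes p ↦ M(μ ⊙ p) over P_k and p_t ∈ P_k maximizes p ↦ M(μ↑ ⊙ p) over P_k. Then 0 ≤ M(μ ⊙ p*) − M(μ ⊙ p_t) ≤ L · max_i (μ↑_i − μ_i) · p_{t,i}; i.e., the per-round welfare regret of the optimistic allocation p_t is at most L times the ℓ∞ distance between μ↑ ⊙ p_t and μ ⊙ p_t. -/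
theorem stmt_17 {n : ℕ} (hn : 0 < n) (k : ℕ) (hk : k ≤ n) (L : ℝ) (hL : 0 ≤ L)
    (M : (Fin n → ℝ) → ℝ)
    (hM_mono : ∀ v v' : Fin n → ℝ, (∀ i, 0 ≤ v i) → (∀ i, 0 ≤ v' i) →
      (∀ i, v i ≤ v' i) → M v ≤ M v')
    (hM_lip : ∀ v v' : Fin n → ℝ, (∀ i, 0 ≤ v i) → (∀ i, 0 ≤ v' i) →
      |M v - M v'| ≤ L * Finset.univ.sup' ⟨⟨0, hn⟩, Finset.mem_univ _⟩ (fun i => |v i - v' i|))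
    (μ μup : Fin n → ℝ) (hμ : ∀ i, 0 ≤ μ i) (hμup : ∀ i, 0 ≤ μup i)
    (hle : ∀ i, μ i ≤ μup i)
    (pstar pt : Fin n → ℝ) (hpstar : pstar ∈ Pk n k) (hpt : pt ∈ Pk n k)
    (hpstar_opt : ∀ p ∈ Pk n k, M (fun i => μ i * p i) ≤ M (fun i => μ i * pstar i))
    (hpt_opt : ∀ p ∈ Pk n k, M (fun i => μup i * p i) ≤ M (fun i => μup i * pt i)) :
    0 ≤ M (fun i => μ i * pstar i) - M (fun i => μ i * pt i) ∧
    M (fun i => μ i * pstar i) - M (fun i => μ i * pt i)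
      ≤ L * Finset.univ.sup' ⟨⟨0, hn⟩, Finset.mem_univ _⟩ (fun i => (μup i - μ i) * pt i) := by

  have hpt0 : ∀ i, 0 ≤ pt i := fun i => (hpt.1 i).1
  have hps0 : ∀ i, 0 ≤ pstar i := fun i => (hpstar.1 i).1
  have h1 : M (fun i => μ i * pt i) ≤ M (fun i => μ i * pstar i) := hpstar_opt pt hpt
  constructor
  · linarith
  · have h2 : M (fun i => μ i * pstar i) ≤ M (fun i => μup i * pstar i) :=
      hM_mono _ _ (fun i => mul_nonneg (hμ i) (hps0 i))
        (fun i => mul_nonneg (hμup i) (hps0 i))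
        (fun i => mul_le_mul_of_nonneg_right (hle i) (hps0 i))
    have h3 : M (fun i => μup i * pstar i) ≤ M (fun i => μup i * pt i) :=
      hpt_opt pstar hpstar
    have h4 := hM_lip (fun i => μup i * pt i) (fun i => μ i * pt i)
      (fun i => mul_nonneg (hμup i) (hpt0 i)) (fun i => mul_nonneg (hμ i) (hpt0 i))
    have heq : (fun i => |μup i * pt i - μ i * pt i|)
        = fun i => (μup i - μ i) * pt i := by
      funext i
      rw [abs_of_nonneg (by nlinarith [hle i, hpt0 i] : (0:ℝ) ≤ μup i * pt i - μ i * pt i)]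
      ring
    rw [heq] at h4
    have := abs_le.mp h4
    linarith [this.2]
end
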